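/- For any strictly positive decreasing sequence η tending to zero and any p ≥ 1, the sequence ξ^(p) = ⟨η₁/p, ..., η₁/p (p times), η₂, η₃, ...⟩ is (p−1)-majorized by η but not p-majorized by η. -/

import Mathlib

open Filter Finset

/-- The decreasing rearrangement of a nonnegative sequence vanishing at infinity:
`rearr ξ n` is the `(n+1)`-st largest value, defined via sups of `n`-term sums. -/
noncomputable def rearr (ξ : ℕ → ℝ) (n : ℕ) : ℝ :=
  (⨆ s : {s : Finset ℕ // s.card = n + 1}, ∑ i ∈ s.1, ξ i)
  - (⨆ s : {s : Finset ℕ // s.card = n}, ∑ i ∈ s.1, ξ i)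

/-- Membership in `c₀⁺`: nonnegative and tending to zero. -/
def InC0Pos (ξ : ℕ → ℝ) : Prop :=
  (∀ n, 0 ≤ ξ n) ∧ Tendsto ξ atTop (nhds 0)

/-- Majorization `ξ ≺ η`: dominated partial sums of decreasing rearrangements and
equal total sums (computed in `ℝ≥0∞` to handle the nonsummable case). -/
def Majorizes (ξ η : ℕ → ℝ) : Prop :=
  (∀ n, ∑ j ∈ range n, rearr ξ j ≤ ∑ j ∈ range n, rearr η j) ∧
    (∑' j, ENNReal.ofReal (ξ j)) = ∑' j, ENNReal.ofReal (η j)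

/-- `p`-majorization `ξ ≺_p η`. -/
def PMajorizes (p : ℕ) (ξ η : ℕ → ℝ) : Prop :=
  Majorizes ξ η ∧ ∃ N, ∀ n ≥ N,
    ∑ k ∈ range (n + p), rearr ξ k ≤ ∑ k ∈ range n, rearr η k

/-- `∞`-majorization `ξ ≺_∞ η`. -/
def InftyMajorizes (ξ η : ℕ → ℝ) : Prop := ∀ p : ℕ, PMajorizes p ξ η

/-- Strong majorization `ξ ≼ η`. -/
def StrongMajorizes (ξ η : ℕ → ℝ) : Prop :=
  (∀ n, ∑ j ∈ range n, rearr ξ j ≤ ∑ j ∈ range n, rearr η j) ∧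
    Filter.liminf (fun n => ∑ j ∈ range n, (rearr η j - rearr ξ j)) atTop = 0

/-- Approximate `p`-majorization `ξ ≾_p η`. -/
def ApproxPMajorizes (p : ℕ) (ξ η : ℕ → ℝ) : Prop :=
  Majorizes ξ η ∧ ∀ ε > 0, ∃ N, ∀ n ≥ N,
    ∑ k ∈ range (n + p), rearr ξ k ≤ ∑ k ∈ range n, rearr η k + ε * rearr η n

/- ### Auxiliary lemmas -/

lemma sum_le_antitone (g : ℕ → ℝ) (hg : Antitone g) (a : ℕ) (t : Finset ℕ)
    (ht : ∀ i ∈ t, a ≤ i) :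
    ∑ i ∈ t, g i ≤ ∑ k ∈ range t.card, g (a + k) := by
  set e := t.orderEmbOfFin rfl with he
  have key : ∀ m (hm : m < t.card), a + m ≤ e ⟨m, hm⟩ := by
    intro m
    induction m with
    | zero => intro hm; simpa using ht _ (t.orderEmbOfFin_mem rfl ⟨0, hm⟩)
    | succ k ih =>
      intro hm
      have hk : k < t.card := Nat.lt_of_succ_lt hm
      have h1 := ih hk
      have h2 : e ⟨k, hk⟩ < e ⟨k+1, hm⟩ := by
        apply (t.orderEmbOfFin rfl).strictMono
        exact Fin.mk_lt_mk.mpr (Nat.lt_succ_self k)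
      omega
  have h1 : ∑ i ∈ t, g i = ∑ k : Fin t.card, g (e k) := by
    refine (Finset.sum_nbij (i := fun k : Fin t.card => (e k : ℕ)) ?_ ?_ ?_ ?_).symm
    · intro k _; exact t.orderEmbOfFin_mem rfl k
    · intro x _ y _ hxy; exact e.injective hxy
    · intro i hi
      have : i ∈ Set.range e := by rw [Finset.range_orderEmbOfFin]; exact hi
      obtain ⟨k, hk⟩ := this
      exact ⟨k, by simp, hk⟩
    · intro k _; rfl
  rw [h1, ← Fin.sum_univ_eq_sum_range (fun k => g (a + k)) t.card]
  apply Finset.sum_le_sum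
  intro k _
  exact hg (key k.1 k.2)

/-- The sup of `n`-term sums. -/
noncomputable def Bsum (ξ : ℕ → ℝ) (n : ℕ) : ℝ :=
  ⨆ s : {s : Finset ℕ // s.card = n}, ∑ i ∈ s.1, ξ i

instance instNonemptyCardSubtype (n : ℕ) : Nonempty {s : Finset ℕ // s.card = n} :=
  ⟨⟨range n, card_range n⟩⟩

lemma Bsum_zero (ξ : ℕ → ℝ) : Bsum ξ 0 = 0 := by
  have h : ∀ s : {s : Finset ℕ // s.card = 0}, ∑ i ∈ s.1, ξ i = 0 := by
    intro s
    rw [Finset.card_eq_zero.mp s.2]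
    simp
  unfold Bsum
  simp only [h]
  exact ciSup_const

lemma sum_rearr (ξ : ℕ → ℝ) (n : ℕ) : ∑ j ∈ range n, rearr ξ j = Bsum ξ n := by
  have h : ∀ j, rearr ξ j = Bsum ξ (j+1) - Bsum ξ j := fun j => rfl
  simp only [h]
  rw [Finset.sum_range_sub (Bsum ξ), Bsum_zero, sub_zero]

lemma Bsum_le {ξ : ℕ → ℝ} {n : ℕ} {c : ℝ}
    (h : ∀ s : Finset ℕ, s.card = n → ∑ i ∈ s, ξ i ≤ c) : Bsum ξ n ≤ c :=
  ciSup_le fun s => h s.1 s.2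

lemma le_Bsum {ξ : ℕ → ℝ} {M : ℝ} (hM : ∀ i, ξ i ≤ M) {n : ℕ} (s : Finset ℕ)
    (hs : s.card = n) : ∑ i ∈ s, ξ i ≤ Bsum ξ n := by
  refine le_ciSup_of_le ?_ (⟨s, hs⟩ : {s : Finset ℕ // s.card = n}) le_rfl
  refine ⟨n * M, ?_⟩
  rintro x ⟨t, rfl⟩
  calc ∑ i ∈ t.1, ξ i ≤ ∑ i ∈ t.1, M := Finset.sum_le_sum (fun i _ => hM i)
    _ = t.1.card * M := by rw [Finset.sum_const, nsmul_eq_mul]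
    _ = n * M := by rw [t.2]

set_option maxHeartbeats 1000000 in
theorem statement10 (η : ℕ → ℝ) (hmono : Antitone η) (hpos : ∀ n, 0 < η n)
    (hlim : Tendsto η atTop (nhds 0)) (p : ℕ) (hp : 1 ≤ p)
    (ξ : ℕ → ℝ) (hξ : ∀ n, ξ n = if n < p then η 0 / p else η (n - p + 1)) :
    PMajorizes (p - 1) ξ η ∧ ¬ PMajorizes p ξ η := by
  have hη0 : 0 < η 0 := hpos 0
  have hpR : (0:ℝ) < p := by exact_mod_cast hp
  have hξbd : ∀ i, ξ i ≤ η 0 := by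
    intro i; rw [hξ i]; split
    · exact div_le_self hη0.le (by exact_mod_cast hp)
    · exact hmono (Nat.zero_le _)
  have hηbd : ∀ i, η i ≤ η 0 := fun i => hmono (Nat.zero_le i)
  -- Bsum of η is the partial sum
  have Bη : ∀ n, Bsum η n = ∑ j ∈ range n, η j := by
    intro n
    apply le_antisymm
    · apply Bsum_le; intro s hs
      have h := sum_le_antitone η hmono 0 s (fun i _ => Nat.zero_le i)
      simpa [hs] using h
    · exact le_Bsum hηbd (range n) (card_range n)
  -- splitting bound for sums of ξ
  have split : ∀ s : Finset ℕ, ∑ i ∈ s, ξ i ≤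
      (s ∩ range p).card * (η 0 / p) + ∑ k ∈ range (s \ range p).card, η (k + 1) := by
    intro s
    rw [← Finset.sum_inter_add_sum_sdiff s (range p) ξ]
    have e1 : ∑ i ∈ s ∩ range p, ξ i = (s ∩ range p).card * (η 0 / p) := by
      rw [Finset.sum_congr rfl (fun i hi => by
        rw [hξ i, if_pos (Finset.mem_range.mp (Finset.mem_inter.mp hi).2)])]
      rw [Finset.sum_const, nsmul_eq_mul]
    have e2 : ∑ i ∈ s \ range p, ξ i ≤ ∑ k ∈ range (s \ range p).card, η (k + 1) := by
      have hmem : ∀ i ∈ s \ range p, p ≤ i := by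
        intro i hi
        have := (Finset.mem_sdiff.mp hi).2
        simpa using this
      have e3 : ∑ i ∈ s \ range p, ξ i = ∑ i ∈ s \ range p, η (i - p + 1) := by
        refine Finset.sum_congr rfl (fun i hi => ?_)
        rw [hξ i, if_neg (by have := hmem i hi; omega)]
      set u := (s \ range p).image (fun i => i - p + 1) with hu
      have hinj : Set.InjOn (fun i => i - p + 1) ↑(s \ range p) := by
        intro x hx y hy hxy
        have hx' := hmem x (Finset.mem_coe.mp hx)
        have hy' := hmem y (Finset.mem_coe.mp hy)
        simp only at hxy
        omega
      have e4 : ∑ i ∈ s \ range p, η (i - p + 1) = ∑ j ∈ u, η j := by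
        rw [hu, Finset.sum_image (fun x hx y hy => hinj hx hy)]
      have hcard : u.card = (s \ range p).card := Finset.card_image_of_injOn hinj
      have e5 : ∑ j ∈ u, η j ≤ ∑ k ∈ range u.card, η (1 + k) := by
        apply sum_le_antitone η hmono 1 u
        intro j hj
        obtain ⟨i, _, rfl⟩ := Finset.mem_image.mp hj
        omega
      rw [e3, e4]
      calc ∑ j ∈ u, η j ≤ ∑ k ∈ range u.card, η (1 + k) := e5
        _ = ∑ k ∈ range (s \ range p).card, η (k + 1) := by
            rw [hcard]; exact Finset.sum_congr rfl (fun k _ => by rw [add_comm])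
    linarith [e1, e2]
  -- arithmetic key lemma (a)
  have key_a : ∀ j m n : ℕ, j ≤ p → j + m = n →
      (j:ℝ) * (η 0 / p) + ∑ k ∈ range m, η (k+1) ≤ ∑ k ∈ range n, η k := by
    intro j m n hj hjm
    have hsum : ∑ k ∈ range m, η (k+1) = ∑ k ∈ range (m+1), η k - η 0 := by
      rw [Finset.sum_range_succ' η m]; ring
    rcases Nat.eq_zero_or_pos j with hj0 | hj1
    · subst hj0
      simp only [Nat.zero_add] at hjm; subst hjm
      rw [hsum, Finset.sum_range_succ]
      have := hηbd m
      simp only [Nat.cast_zero]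
      linarith
    · have h1 : (j:ℝ) * (η 0 / p) ≤ η 0 := by
        have hjp : (j:ℝ) ≤ p := Nat.cast_le.mpr hj
        calc (j:ℝ) * (η 0 / p) ≤ p * (η 0 / p) :=
              mul_le_mul_of_nonneg_right hjp (by positivity)
          _ = η 0 := by field_simp
      have h2 : ∑ k ∈ range (m+1), η k ≤ ∑ k ∈ range n, η k := by
        apply Finset.sum_le_sum_of_subset_of_nonneg
        · exact Finset.range_subset_range.mpr (by omega)
        · intro i _ _; exact (hpos i).le
      rw [hsum]; linarith
  -- arithmetic key lemma (b)
  have key_b : ∀ n : ℕ, η n ≤ η 0 / p → ∀ j m : ℕ, j ≤ p → j + m + 1 = n + p →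
      (j:ℝ) * (η 0 / p) + ∑ k ∈ range m, η (k+1) ≤ ∑ k ∈ range n, η k := by
    intro n hn j m hj hjm
    obtain ⟨q, hq⟩ : ∃ q, p = j + q := ⟨p - j, by omega⟩
    have hm1 : m + 1 = n + q := by omega
    have hsum : ∑ k ∈ range m, η (k+1) = ∑ k ∈ range (m+1), η k - η 0 := by
      rw [Finset.sum_range_succ' η m]; ring
    have htail : ∑ k ∈ range (m+1), η k
        = ∑ k ∈ range n, η k + ∑ i ∈ range q, η (n+i) := by
      rw [hm1, Finset.sum_range_add]
    have hbound : ∑ i ∈ range q, η (n+i) ≤ (q:ℝ) * (η 0 / p) := by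
      calc ∑ i ∈ range q, η (n+i) ≤ ∑ i ∈ range q, η n :=
            Finset.sum_le_sum (fun i _ => hmono (Nat.le_add_right n i))
        _ = (q:ℝ) * η n := by rw [Finset.sum_const, card_range, nsmul_eq_mul]
        _ ≤ (q:ℝ) * (η 0 / p) := mul_le_mul_of_nonneg_left hn (by positivity)
    have hjq : (j:ℝ) * (η 0 / p) + (q:ℝ) * (η 0 / p) = η 0 := by
      have hpc : (j:ℝ) + q = p := by rw [hq]; push_cast; ring
      rw [← add_mul, hpc]; field_simp
    rw [hsum, htail]; linarith
  -- total sum equality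
  have htsum : (∑' j, ENNReal.ofReal (ξ j)) = ∑' j, ENNReal.ofReal (η j) := by
    rw [← Summable.sum_add_tsum_nat_add' (f := fun j => ENNReal.ofReal (ξ j)) (k := p) ENNReal.summable,
        ← Summable.sum_add_tsum_nat_add' (f := fun j => ENNReal.ofReal (η j)) (k := 1) ENNReal.summable]
    congr 1
    · have h1 : ∀ i ∈ range p, ENNReal.ofReal (ξ i) = ENNReal.ofReal (η 0 / p) := by
        intro i hi
        rw [hξ i, if_pos (Finset.mem_range.mp hi)]
      rw [Finset.sum_congr rfl h1, Finset.sum_const, card_range, nsmul_eq_mul,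
        ← ENNReal.ofReal_natCast p, ← ENNReal.ofReal_mul (by positivity)]
      simp only [Finset.sum_range_one]
      congr 1
      field_simp
    · apply tsum_congr
      intro i
      congr 1
      rw [hξ (i + p), if_neg (by omega)]
      congr 1
      omega
  -- the upper bound ∀ n, Bsum ξ n ≤ Bsum η n
  have first : ∀ n, ∑ j ∈ range n, rearr ξ j ≤ ∑ j ∈ range n, rearr η j := by
    intro n
    rw [sum_rearr, sum_rearr, Bη]
    apply Bsum_le
    intro s hs
    have hj : (s ∩ range p).card ≤ p := by
      calc (s ∩ range p).card ≤ (range p).card :=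
            Finset.card_le_card Finset.inter_subset_right
        _ = p := card_range p
    have hjm : (s ∩ range p).card + (s \ range p).card = n := by
      rw [Finset.card_inter_add_card_sdiff]; exact hs
    exact le_trans (split s) (key_a _ _ n hj hjm)
  refine ⟨⟨⟨first, htsum⟩, ?_⟩, ?_⟩
  · -- (p-1)-majorization tail condition
    obtain ⟨N, hN⟩ := (Metric.tendsto_atTop.mp hlim) (η 0 / p) (by positivity)
    refine ⟨N, fun n hn => ?_⟩
    have hηn : η n ≤ η 0 / p := by
      have := hN n hn
      rw [Real.dist_eq, sub_zero, abs_of_pos (hpos n)] at this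
      exact this.le
    rw [sum_rearr, sum_rearr, Bη]
    apply Bsum_le
    intro s hs
    have hj : (s ∩ range p).card ≤ p := by
      calc (s ∩ range p).card ≤ (range p).card :=
            Finset.card_le_card Finset.inter_subset_right
        _ = p := card_range p
    have hjm : (s ∩ range p).card + (s \ range p).card + 1 = n + p := by
      rw [Finset.card_inter_add_card_sdiff, hs]; omega
    exact le_trans (split s) (key_b n hηn _ _ hj hjm)
  · -- not p-majorized
    rintro ⟨-, N, hN⟩
    have h := hN N le_rfl
    rw [sum_rearr, sum_rearr, Bη] at h
    have hlow : ∑ i ∈ range (N + p), ξ i ≤ Bsum ξ (N + p) :=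
      le_Bsum hξbd (range (N + p)) (card_range _)
    have hcomp : ∑ i ∈ range (N + p), ξ i = ∑ k ∈ range (N + 1), η k := by
      rw [add_comm N p, Finset.sum_range_add]
      have e1 : ∑ i ∈ range p, ξ i = η 0 := by
        rw [Finset.sum_congr rfl (fun i hi => by
          rw [hξ i, if_pos (Finset.mem_range.mp hi)]),
          Finset.sum_const, card_range, nsmul_eq_mul]
        field_simp
      have e2 : ∑ i ∈ range N, ξ (p + i) = ∑ i ∈ range N, η (i + 1) := by
        refine Finset.sum_congr rfl (fun i _ => ?_)
        rw [hξ (p + i), if_neg (by omega)]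
        congr 1
        omega
      rw [e1, e2, Finset.sum_range_succ' η N]
      ring
    have hfin : ∑ k ∈ range N, η k < ∑ k ∈ range (N + 1), η k := by
      rw [Finset.sum_range_succ]
      linarith [hpos N]
    linarith
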